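/- arXiv:2304.13127 — 3 statements merged into one kernel-verified Lean document; each statement's English description precedes it below -/
import Mathlib

section
/- (Uniform bound in the proof of Lemma 4.3.) Let a < c and δ > 0, and let g : [a,c] → ℝ be absolutely continuous with integrable derivative g' and |g(x)| ≤ 1/2 - δ for all x ∈ [a,c]. Then there exists M > 0, independent of λ, such that for every λ ∈ ℝ with λ ≠ 0 and every absolutely continuous θ : [a,c] → ℝ satisfying θ'(s) = λ(1/2 + g(s) cos 2θ(s)) a.e., one has |∫ₐˣ g(s) sin 2θ(s) ds| ≤ M/|λ| for all x ∈ [a,c]. -/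
/-!
Put `u = 1/2 + g cos 2θ`, so that `θ' = λ u` and `δ ≤ u ≤ 1 - δ`. Then `log u` is absolutely
continuous with `(log u)' = g' cos 2θ / u - 2λ g sin 2θ` a.e.; the factor `u` produced by `θ'`
cancels against the `1/u` of the logarithm. Integrating,
`2λ ∫ₐˣ g sin 2θ = ∫ₐˣ g' cos 2θ / u - (log u(x) - log u(a))`, and the right-hand side is at most
`‖g'‖₁ / δ - 2 log δ` in absolute value, uniformly in `λ`.
-/

open MeasureTheory Set Filter

section

variable {X Y : Type*} [PseudoMetricSpace X] [PseudoMetricSpace Y] {a b : ℝ}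

theorem AbsolutelyContinuousOnInterval.congr {f g : ℝ → X}
    (hf : AbsolutelyContinuousOnInterval f a b) (hfg : EqOn f g (uIcc a b)) :
    AbsolutelyContinuousOnInterval g a b := by
  refine hf.congr' (eventually_inf_principal.2 (Eventually.of_forall fun E hE => ?_))
  exact Finset.sum_congr rfl fun i hi => by
    rw [hfg (hE.1 i hi).1, hfg (hE.1 i hi).2]

theorem LipschitzOnWith.comp_absolutelyContinuousOnInterval {φ : X → Y} {K : NNReal}
    {s : Set X} {f : ℝ → X} (hφ : LipschitzOnWith K φ s)
    (hf : AbsolutelyContinuousOnInterval f a b) (hfs : MapsTo f (uIcc a b) s) :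
    AbsolutelyContinuousOnInterval (φ ∘ f) a b := by
  refine squeeze_zero' (Eventually.of_forall fun E => Finset.sum_nonneg fun i _ => dist_nonneg)
    (eventually_inf_principal.2 (Eventually.of_forall fun E hE => ?_))
    (by simpa using Tendsto.const_mul (K : ℝ) hf)
  rw [Finset.mul_sum]
  exact Finset.sum_le_sum fun i hi =>
    hφ.dist_le_mul _ (hfs (hE.1 i hi).1) _ (hfs (hE.1 i hi).2)

end

section

variable {a b : ℝ} {f q : ℝ → ℝ}

theorem absolutelyContinuousOnInterval_of_eq_add_integral
    (hq : IntervalIntegrable q volume a b) (hf : ∀ x ∈ uIcc a b, f x = f a + ∫ s in a..x, q s) :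
    AbsolutelyContinuousOnInterval f a b :=
  ((LipschitzWith.const (f a)).lipschitzOnWith.absolutelyContinuousOnInterval.add
    (hq.absolutelyContinuousOnInterval_intervalIntegral left_mem_uIcc)).congr
    fun x hx => (hf x hx).symm

theorem ae_hasDerivAt_of_eq_add_integral
    (hq : IntervalIntegrable q volume a b) (hf : ∀ x ∈ uIcc a b, f x = f a + ∫ s in a..x, q s) :
    ∀ᵐ x, x ∈ uIcc a b → HasDerivAt f (q x) x := by
  filter_upwards [hq.ae_hasDerivAt_integral, ((countable_singleton b).insert a).ae_notMem volume]
    with x hx hxab hxI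
  have hmem : uIcc a b ∈ nhds x := by
    rw [mem_insert_iff, mem_singleton_iff, not_or] at hxab
    rw [uIcc] at hxI ⊢
    exact Icc_mem_nhds (lt_of_le_of_ne hxI.1 (by grind)) (lt_of_le_of_ne hxI.2 (by grind))
  refine ((hx hxI a left_mem_uIcc).const_add (f a)).congr_of_eventuallyEq ?_
  filter_upwards [hmem] with y hy using hf y hy

theorem AbsolutelyContinuousOnInterval.integral_eq_sub_of_ae_hasDerivAt {f' : ℝ → ℝ}
    (hf : AbsolutelyContinuousOnInterval f a b)
    (hf' : ∀ᵐ x, x ∈ uIcc a b → HasDerivAt f (f' x) x) :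
    ∫ x in a..b, f' x = f b - f a := by
  rw [← hf.integral_deriv_eq_sub]
  refine intervalIntegral.integral_congr_ae ?_
  filter_upwards [hf'] with x hx hxI
  exact (hx (uIoc_subset_uIcc hxI)).deriv.symm

end

theorem Real.lipschitzOnWith_log_Ici {δ : ℝ} (hδ : 0 < δ) :
    LipschitzOnWith (Real.toNNReal δ⁻¹) Real.log (Ici δ) := by
  refine (convex_Ici δ).lipschitzOnWith_of_nnnorm_deriv_le
    (fun x hx => Real.differentiableAt_log (hδ.trans_le hx).ne') fun x hx => ?_
  have hx0 : 0 < x := hδ.trans_le hx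
  rw [Real.deriv_log, ← NNReal.coe_le_coe, coe_nnnorm, Real.coe_toNNReal _ (by positivity),
    Real.norm_eq_abs, abs_inv, abs_of_pos hx0]
  exact inv_anti₀ hδ hx

theorem Real.abs_log_le_neg_log {δ y : ℝ} (hδ : 0 < δ) (hδy : δ ≤ y) (hy : y ≤ 1) :
    |Real.log y| ≤ -Real.log δ := by
  have hlow := Real.log_le_log hδ hδy
  have hup := Real.log_nonpos (hδ.le.trans hδy) hy
  rw [abs_le]
  constructor <;> linarith

/-- `1/2 + g cos 2θ = (1/2 + g) cos² θ + (1/2 - g) sin² θ` is the quadratic form of the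
coefficient matrix `diag(1/2 + g, 1/2 - g)` at `(cos θ, sin θ)`. -/
noncomputable def prueferRate (g θ : ℝ → ℝ) (s : ℝ) : ℝ := 1/2 + g s * Real.cos (2 * θ s)

section Pruefer

variable {g gd θ : ℝ → ℝ} {a b δ lam : ℝ}

theorem prueferRate_mem_Icc {s : ℝ} (h : |g s| ≤ 1/2 - δ) :
    prueferRate g θ s ∈ Icc δ (1 - δ) := by
  have hcos : |g s * Real.cos (2 * θ s)| ≤ 1/2 - δ := by
    rw [abs_mul]
    exact (mul_le_of_le_one_right (abs_nonneg _) (Real.abs_cos_le_one _)).trans h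
  rw [prueferRate]
  constructor <;> linarith [abs_le.1 hcos, abs_nonneg (g s)]

theorem hasDerivAt_log_prueferRate {g' x : ℝ} (hg : HasDerivAt g g' x)
    (hθ : HasDerivAt θ (lam * prueferRate g θ x) x) (hne : prueferRate g θ x ≠ 0) :
    HasDerivAt (fun s => Real.log (prueferRate g θ s))
      (g' * Real.cos (2 * θ x) / prueferRate g θ x - 2 * lam * (g x * Real.sin (2 * θ x))) x := by
  have hu : HasDerivAt (prueferRate g θ) (g' * Real.cos (2 * θ x) +
      g x * (-Real.sin (2 * θ x) * (2 * (lam * prueferRate g θ x)))) x :=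
    (hg.mul (hθ.const_mul 2).cos).const_add (1/2)
  convert hu.log hne using 1
  field_simp
  ring

theorem absolutelyContinuousOnInterval_log_prueferRate (hδ : 0 < δ)
    (hg : AbsolutelyContinuousOnInterval g a b) (hθ : AbsolutelyContinuousOnInterval θ a b)
    (hgbd : ∀ x ∈ uIcc a b, |g x| ≤ 1/2 - δ) :
    AbsolutelyContinuousOnInterval (fun s => Real.log (prueferRate g θ s)) a b := by
  have hcos : AbsolutelyContinuousOnInterval (fun s => Real.cos (2 * θ s)) a b :=
    Real.lipschitzWith_cos.lipschitzOnWith.comp_absolutelyContinuousOnInterval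
      (hθ.const_mul 2) (mapsTo_univ _ _)
  have hu : AbsolutelyContinuousOnInterval (prueferRate g θ) a b :=
    (LipschitzWith.const (1/2 : ℝ)).lipschitzOnWith.absolutelyContinuousOnInterval.fun_add
      (hg.fun_mul hcos)
  exact (Real.lipschitzOnWith_log_Ici hδ).comp_absolutelyContinuousOnInterval hu
    fun x hx => (prueferRate_mem_Icc (hgbd x hx)).1

theorem two_mul_integral_mul_sin_eq (hδ : 0 < δ)
    (hgd : IntervalIntegrable gd volume a b)
    (hg : ∀ x ∈ uIcc a b, g x = g a + ∫ s in a..x, gd s)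
    (hgbd : ∀ x ∈ uIcc a b, |g x| ≤ 1/2 - δ) (hθc : ContinuousOn θ (uIcc a b))
    (hθ : ∀ x ∈ uIcc a b, θ x = θ a + ∫ s in a..x, lam * prueferRate g θ s) :
    2 * lam * ∫ s in a..b, g s * Real.sin (2 * θ s) =
      (∫ s in a..b, gd s * Real.cos (2 * θ s) / prueferRate g θ s) -
        (Real.log (prueferRate g θ b) - Real.log (prueferRate g θ a)) := by
  have hg_ac := absolutelyContinuousOnInterval_of_eq_add_integral hgd hg
  have hcos : ContinuousOn (fun s => Real.cos (2 * θ s)) (uIcc a b) :=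
    Real.continuous_cos.comp_continuousOn (continuousOn_const.mul hθc)
  have hrate : ContinuousOn (prueferRate g θ) (uIcc a b) :=
    continuousOn_const.add (hg_ac.continuousOn.mul hcos)
  have hrate_pos : ∀ x ∈ uIcc a b, 0 < prueferRate g θ x :=
    fun x hx => hδ.trans_le (prueferRate_mem_Icc (hgbd x hx)).1
  have hθ' : IntervalIntegrable (fun s => lam * prueferRate g θ s) volume a b :=
    (continuousOn_const.mul hrate).intervalIntegrable
  have hθ_ac := absolutelyContinuousOnInterval_of_eq_add_integral hθ' hθ
  have hderiv : ∀ᵐ x, x ∈ uIcc a b →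
      HasDerivAt (fun s => Real.log (prueferRate g θ s))
        (gd x * Real.cos (2 * θ x) / prueferRate g θ x - 2 * lam * (g x * Real.sin (2 * θ x)))
        x := by
    filter_upwards [ae_hasDerivAt_of_eq_add_integral hgd hg,
      ae_hasDerivAt_of_eq_add_integral hθ' hθ] with x hgx hθx hx
    exact hasDerivAt_log_prueferRate (hgx hx) (hθx hx) (hrate_pos x hx).ne'
  rw [← (absolutelyContinuousOnInterval_log_prueferRate hδ hg_ac hθ_ac
    hgbd).integral_eq_sub_of_ae_hasDerivAt hderiv, intervalIntegral.integral_sub,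
    intervalIntegral.integral_const_mul]
  · ring
  · simpa only [mul_div_assoc, Pi.div_apply] using
      hgd.mul_continuousOn (hcos.div hrate fun x hx => (hrate_pos x hx).ne')
  · exact (hg_ac.continuousOn.mul (Real.continuous_sin.comp_continuousOn
      (continuousOn_const.mul hθc))).intervalIntegrable.const_mul _

theorem two_mul_abs_integral_mul_sin_le (hab : a ≤ b) (hδ : 0 < δ)
    (hgd : IntervalIntegrable gd volume a b)
    (hg : ∀ x ∈ uIcc a b, g x = g a + ∫ s in a..x, gd s)
    (hgbd : ∀ x ∈ uIcc a b, |g x| ≤ 1/2 - δ) (hθc : ContinuousOn θ (uIcc a b))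
    (hθ : ∀ x ∈ uIcc a b, θ x = θ a + ∫ s in a..x, lam * prueferRate g θ s) :
    2 * |lam| * |∫ s in a..b, g s * Real.sin (2 * θ s)| ≤
      (∫ s in a..b, |gd s|) / δ - 2 * Real.log δ := by
  have hrate : ∀ x ∈ uIcc a b, prueferRate g θ x ∈ Icc δ (1 - δ) :=
    fun x hx => prueferRate_mem_Icc (hgbd x hx)
  have hlog : ∀ x ∈ uIcc a b, |Real.log (prueferRate g θ x)| ≤ -Real.log δ :=
    fun x hx => Real.abs_log_le_neg_log hδ (hrate x hx).1 (by linarith [(hrate x hx).2])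
  have hint : |∫ s in a..b, gd s * Real.cos (2 * θ s) / prueferRate g θ s| ≤
      (∫ s in a..b, |gd s|) / δ := by
    rw [← intervalIntegral.integral_div, ← Real.norm_eq_abs]
    refine intervalIntegral.norm_integral_le_of_norm_le hab
      (Eventually.of_forall fun s hs => ?_) (hgd.abs.div_const δ)
    have hs' : s ∈ uIcc a b := by rw [uIcc_of_le hab]; exact Ioc_subset_Icc_self hs
    rw [Real.norm_eq_abs, abs_div, abs_mul, abs_of_pos (hδ.trans_le (hrate s hs').1)]
    exact div_le_div₀ (abs_nonneg _) (mul_le_of_le_one_right (abs_nonneg _)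
      (Real.abs_cos_le_one _)) hδ (hrate s hs').1
  calc 2 * |lam| * |∫ s in a..b, g s * Real.sin (2 * θ s)|
      = |2 * lam * ∫ s in a..b, g s * Real.sin (2 * θ s)| := by rw [abs_mul, abs_mul, abs_two]
    _ = |(∫ s in a..b, gd s * Real.cos (2 * θ s) / prueferRate g θ s) -
          (Real.log (prueferRate g θ b) - Real.log (prueferRate g θ a))| := by
      rw [two_mul_integral_mul_sin_eq hδ hgd hg hgbd hθc hθ]
    _ ≤ |∫ s in a..b, gd s * Real.cos (2 * θ s) / prueferRate g θ s| +
          (|Real.log (prueferRate g θ b)| + |Real.log (prueferRate g θ a)|) :=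
      (abs_sub _ _).trans (add_le_add_right (abs_sub _ _) _)
    _ ≤ (∫ s in a..b, |gd s|) / δ + (-Real.log δ + -Real.log δ) := by
      gcongr
      exacts [hlog b right_mem_uIcc, hlog a left_mem_uIcc]
    _ = (∫ s in a..b, |gd s|) / δ - 2 * Real.log δ := by ring

end Pruefer

/-- uniform bound in the proof of Lemma 4.3. If `g` is absolutely
continuous with `|g| ≤ 1/2 - δ` on `[a,c]`, there is `M > 0`, independent of `λ`, such
that for every `λ ≠ 0` and every Prüfer angle `θ` with `θ' = λ(1/2 + g cos 2θ)` a.e.,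
`|∫ₐˣ g sin 2θ| ≤ M/|λ|` for all `x ∈ [a,c]`. -/
theorem pruefer_uniform_bound
    (a c δ : ℝ) (hac : a < c) (hδ : 0 < δ)
    (g gd : ℝ → ℝ)
    (hgdint : IntegrableOn gd (Icc a c))
    (hg : ∀ x ∈ Icc a c, g x = g a + ∫ s in a..x, gd s)
    (hgbd : ∀ x ∈ Icc a c, |g x| ≤ 1/2 - δ) :
    ∃ M > 0, ∀ lam : ℝ, lam ≠ 0 → ∀ θ : ℝ → ℝ,
      ContinuousOn θ (Icc a c) →
      (∀ x ∈ Icc a c,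
        θ x = θ a + ∫ s in a..x, lam * (1/2 + g s * Real.cos (2 * θ s))) →
      ∀ x ∈ Icc a c,
        |∫ s in a..x, g s * Real.sin (2 * θ s)| ≤ M / |lam| := by
  have hgd : IntervalIntegrable gd volume a c :=
    (uIcc_of_le hac.le ▸ hgdint).intervalIntegrable
  have hδ1 : δ < 1 := by linarith [hgbd a (left_mem_Icc.2 hac.le), abs_nonneg (g a)]
  have hK : 0 ≤ ∫ s in a..c, |gd s| :=
    intervalIntegral.integral_nonneg hac.le fun s _ => abs_nonneg _
  refine ⟨(∫ s in a..c, |gd s|) / δ - Real.log δ,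
    by linarith [div_nonneg hK hδ.le, Real.log_neg hδ hδ1], ?_⟩
  intro lam hlam θ hθc hθ x hx
  have hsub : uIcc a x ⊆ Icc a c := by
    rw [uIcc_of_le hx.1]; exact Icc_subset_Icc_right hx.2
  have hbound := two_mul_abs_integral_mul_sin_le hx.1 hδ
    (hgd.mono_set (uIcc_of_le hac.le ▸ hsub)) (fun y hy => hg y (hsub hy))
    (fun y hy => hgbd y (hsub hy)) (hθc.mono hsub) (fun y hy => hθ y (hsub hy))
  have hmono : ∫ s in a..x, |gd s| ≤ ∫ s in a..c, |gd s| :=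
    intervalIntegral.integral_mono_interval le_rfl hx.1 hx.2
      (Eventually.of_forall fun s => abs_nonneg _) hgd.abs
  rw [le_div_iff₀ (abs_pos.2 hlam)]
  linarith [div_le_div_of_nonneg_right hmono hδ.le, div_nonneg hK hδ.le, Real.log_neg hδ hδ1]
end

section
/- (Lemma 4.3.) Let b > 0 and H(x) = diag(1/2 + g(x), 1/2 - g(x)) with g : [0,b] → ℝ integrable, |g| ≤ 1/2 a.e. Suppose there exist [a,c] ⊂ (0,b] and δ > 0 such that g restricted to [a,c] is absolutely continuous with integrable derivative and |g(x)| ≤ 1/2 - δ on [a,c]. Then there exists C₁ > 0, independent of the spectral parameter, such that for every λ ∈ ℝ, (∫₀^b u(λ,x)ᵀ H(x) u(λ,x) dx)^{1/2} ≥ C₁·‖u(λ,a)‖, where ‖·‖ is the Euclidean norm on ℝ². -/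
open MeasureTheory Matrix Set

noncomputable section

/-- The symplectic matrix 𝒥 = [[0,-1],[1,0]] over ℝ. -/
def J2 : Matrix (Fin 2) (Fin 2) ℝ := !![0, -1; 1, 0]

/-- The symplectic matrix 𝒥 = [[0,-1],[1,0]] over ℂ. -/
def J2C : Matrix (Fin 2) (Fin 2) ℂ := !![0, -1; 1, 0]

/-- Complexification of a real 2×2 matrix. -/
def cmat (M : Matrix (Fin 2) (Fin 2) ℝ) : Matrix (Fin 2) (Fin 2) ℂ :=
  M.map Complex.ofReal

/-!
Along a solution of `𝒥 u' = -λ H u`, the energy `E = uᵀ H u` satisfies `E' = g' (u₀² - u₁²)`: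
the `λ`-terms cancel because `𝒥` is skew, so only the derivative of `H` survives. On `[a, c]`
we have `H ≥ δ`, hence `|E'| ≤ k E` with `k = 2 |g'| / δ`. On any piece of `[a, c]` carrying
`∫ k ≤ 1/4` the energy drops by at most a factor `2/3`, and `[a, c]` is covered by
`⌈4 ∫ₐᶜ k⌉ + 1` such pieces. This bounds `E` on `[a, c]` below by a multiple of `E(a)` that does
not depend on `λ`; integrate over `[a, c]` and use `H ≥ 0` on `[0, b]`.
-/

theorem IntervalIntegrable.of_mem_Icc {E : Type*} [NormedAddCommGroup E] {f : ℝ → E}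
    {μ : Measure ℝ} {a c x y : ℝ} (h : IntervalIntegrable f μ a c) (hx : x ∈ Icc a c)
    (hy : y ∈ Icc a c) : IntervalIntegrable f μ x y :=
  h.mono_set (uIcc_subset_uIcc (Icc_subset_uIcc hx) (Icc_subset_uIcc hy))

/-- `F` is absolutely continuous on `[a, c]` with derivative `f`. -/
structure IsPrimitiveOn {E : Type*} [NormedAddCommGroup E] [NormedSpace ℝ E]
    (F f : ℝ → E) (a c : ℝ) : Prop where
  le : a ≤ c
  intervalIntegrable : IntervalIntegrable f volume a c
  eq_add_integral : ∀ x ∈ Icc a c, F x = F a + ∫ t in a..x, f t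

namespace IsPrimitiveOn

section NormedSpace

variable {E E' : Type*} [NormedAddCommGroup E] [NormedSpace ℝ E]
  [NormedAddCommGroup E'] [NormedSpace ℝ E'] {F f : ℝ → E} {a c : ℝ}

theorem sub_eq_integral (h : IsPrimitiveOn F f a c) {x y : ℝ} (hx : x ∈ Icc a c)
    (hy : y ∈ Icc a c) : F y - F x = ∫ t in x..y, f t := by
  have ha : a ∈ Icc a c := left_mem_Icc.2 h.le
  rw [h.eq_add_integral y hy, h.eq_add_integral x hx, add_sub_add_left_eq_sub,
    intervalIntegral.integral_interval_sub_left (h.intervalIntegrable.of_mem_Icc ha hy)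
      (h.intervalIntegrable.of_mem_Icc ha hx)]

theorem mono (h : IsPrimitiveOn F f a c) {p q : ℝ} (hap : a ≤ p) (hpq : p ≤ q) (hqc : q ≤ c) :
    IsPrimitiveOn F f p q where
  le := hpq
  intervalIntegrable := h.intervalIntegrable.of_mem_Icc ⟨hap, hpq.trans hqc⟩ ⟨hap.trans hpq, hqc⟩
  eq_add_integral x hx := by
    rw [← h.sub_eq_integral ⟨hap, hpq.trans hqc⟩ ⟨hap.trans hx.1, hx.2.trans hqc⟩]
    abel

theorem continuousOn (h : IsPrimitiveOn F f a c) : ContinuousOn F (Icc a c) := by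
  rw [← uIcc_of_le h.le]
  refine (continuousOn_const.add
    (intervalIntegral.continuousOn_primitive_interval' h.intervalIntegrable left_mem_uIcc)).congr
    fun x hx => h.eq_add_integral x (uIcc_of_le h.le ▸ hx)

theorem congr (h : IsPrimitiveOn F f a c) {f' : ℝ → E} (hff' : EqOn f f' (Icc a c)) :
    IsPrimitiveOn F f' a c where
  le := h.le
  intervalIntegrable := (intervalIntegrable_congr
    (hff'.mono (uIoc_of_le h.le ▸ Ioc_subset_Icc_self))).1 h.intervalIntegrable
  eq_add_integral x hx := by
    rw [h.eq_add_integral x hx, intervalIntegral.integral_congr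
      (hff'.mono (uIcc_of_le hx.1 ▸ Icc_subset_Icc_right hx.2))]

theorem add {G g : ℝ → E} (hF : IsPrimitiveOn F f a c) (hG : IsPrimitiveOn G g a c) :
    IsPrimitiveOn (fun x => F x + G x) (fun t => f t + g t) a c where
  le := hF.le
  intervalIntegrable := hF.intervalIntegrable.add hG.intervalIntegrable
  eq_add_integral x hx := by
    have ha : a ∈ Icc a c := left_mem_Icc.2 hF.le
    rw [hF.eq_add_integral x hx, hG.eq_add_integral x hx, intervalIntegral.integral_add
      (hF.intervalIntegrable.of_mem_Icc ha hx) (hG.intervalIntegrable.of_mem_Icc ha hx)]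
    abel

theorem const_add (h : IsPrimitiveOn F f a c) (C : E) :
    IsPrimitiveOn (fun x => C + F x) f a c where
  le := h.le
  intervalIntegrable := h.intervalIntegrable
  eq_add_integral x hx := by rw [h.eq_add_integral x hx]; abel

theorem const_sub (h : IsPrimitiveOn F f a c) (C : E) :
    IsPrimitiveOn (fun x => C - F x) (fun t => -f t) a c where
  le := h.le
  intervalIntegrable := h.intervalIntegrable.neg
  eq_add_integral x hx := by rw [h.eq_add_integral x hx, intervalIntegral.integral_neg]; abel

theorem comp_continuousLinearMap [CompleteSpace E] [CompleteSpace E']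
    (h : IsPrimitiveOn F f a c) (L : E →L[ℝ] E') :
    IsPrimitiveOn (fun x => L (F x)) (fun t => L (f t)) a c where
  le := h.le
  intervalIntegrable :=
    ⟨L.integrable_comp h.intervalIntegrable.1, L.integrable_comp h.intervalIntegrable.2⟩
  eq_add_integral x hx := by
    rw [h.eq_add_integral x hx, map_add,
      L.intervalIntegral_comp_comm (h.intervalIntegrable.of_mem_Icc (left_mem_Icc.2 h.le) hx)]

end NormedSpace

variable {F f G g : ℝ → ℝ} {a c : ℝ}

theorem absolutelyContinuousOnInterval_primitive (h : IsPrimitiveOn F f a c) :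
    AbsolutelyContinuousOnInterval (fun x => F a + ∫ t in a..x, f t) a c := by
  have hconst : AbsolutelyContinuousOnInterval (fun _ : ℝ => F a) a c :=
    (LipschitzWith.const (F a)).lipschitzOnWith.absolutelyContinuousOnInterval
  exact hconst.fun_add (h.intervalIntegrable.absolutelyContinuousOnInterval_intervalIntegral
    left_mem_uIcc)

theorem ae_hasDerivAt_primitive (h : IsPrimitiveOn F f a c) :
    ∀ᵐ t, t ∈ uIcc a c → HasDerivAt (fun x => F a + ∫ t in a..x, f t) (f t) t := by
  filter_upwards [h.intervalIntegrable.ae_hasDerivAt_integral] with t ht htac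
  exact (ht htac a left_mem_uIcc).const_add (F a)

theorem mul (hF : IsPrimitiveOn F f a c) (hG : IsPrimitiveOn G g a c) :
    IsPrimitiveOn (fun x => F x * G x) (fun t => f t * G t + F t * g t) a c := by
  have hFG : IntervalIntegrable (fun t => f t * G t + F t * g t) volume a c :=
    (hF.intervalIntegrable.mul_continuousOn (uIcc_of_le hF.le ▸ hG.continuousOn)).add
      (hG.intervalIntegrable.continuousOn_mul (uIcc_of_le hF.le ▸ hF.continuousOn))
  refine ⟨hF.le, hFG, fun x hx => ?_⟩
  have hsub : uIcc a x ⊆ uIcc a c := uIcc_subset_uIcc left_mem_uIcc (Icc_subset_uIcc hx)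
  have hpart := (hF.absolutelyContinuousOnInterval_primitive.mono hsub).integral_deriv_mul_eq_sub
    (hG.absolutelyContinuousOnInterval_primitive.mono hsub)
  simp only [intervalIntegral.integral_same, add_zero, ← hF.eq_add_integral x hx,
    ← hG.eq_add_integral x hx] at hpart
  rw [← sub_eq_iff_eq_add', ← hpart]
  refine intervalIntegral.integral_congr_ae ?_
  filter_upwards [hF.ae_hasDerivAt_primitive, hG.ae_hasDerivAt_primitive] with t htF htG ht
  have htac : t ∈ uIcc a c := hsub (uIoc_subset_uIcc ht)
  have htIcc : t ∈ Icc a c := uIcc_of_le hF.le ▸ htac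
  rw [(htF htac).deriv, (htG htac).deriv, ← hF.eq_add_integral t htIcc,
    ← hG.eq_add_integral t htIcc]

section Gronwall

variable {E ρ k : ℝ → ℝ} {a c : ℝ}

/-- With `M = max E` on `[p, q]`, every `|E z - E p|` is at most `M / 4`; at the maximum this
gives `M ≤ 4/3 E p`, and then `E q ≥ E p - M / 4 ≥ 2/3 E p`. -/
theorem two_thirds_mul_le (hE : IsPrimitiveOn E ρ a c) (hk : IntervalIntegrable k volume a c)
    (hk0 : ∀ x ∈ Icc a c, 0 ≤ k x) (hE0 : ∀ x ∈ Icc a c, 0 ≤ E x)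
    (hρ : ∀ x ∈ Icc a c, |ρ x| ≤ k x * E x) {p q : ℝ} (hp : p ∈ Icc a c) (hq : q ∈ Icc a c)
    (hpq : p ≤ q) (hsmall : ∫ t in p..q, k t ≤ 1 / 4) : 2 / 3 * E p ≤ E q := by
  have hpqac : Icc p q ⊆ Icc a c := Icc_subset_Icc hp.1 hq.2
  have hkI : ∀ z ∈ Icc p q, IntervalIntegrable k volume p z := fun z hz =>
    hk.of_mem_Icc hp (hpqac hz)
  obtain ⟨m, hm, hmax⟩ := isCompact_Icc.exists_isMaxOn (nonempty_Icc.2 hpq)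
    (hE.continuousOn.mono hpqac)
  have hdev : ∀ z ∈ Icc p q, |E z - E p| ≤ E m / 4 := by
    intro z hz
    have hzac := hpqac hz
    have hkz : ∫ t in p..z, k t ≤ 1 / 4 :=
      (intervalIntegral.integral_mono_interval le_rfl hz.1 hz.2
        ((ae_restrict_mem measurableSet_Ioc).mono fun t ht =>
          hk0 t (hpqac (Ioc_subset_Icc_self ht)))
        (hkI q (right_mem_Icc.2 hpq))).trans hsmall
    rw [hE.sub_eq_integral hp hzac]
    calc |∫ t in p..z, ρ t| ≤ ∫ t in p..z, |ρ t| :=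
          intervalIntegral.abs_integral_le_integral_abs hz.1
      _ ≤ ∫ t in p..z, k t * E m := by
          refine intervalIntegral.integral_mono_on hz.1
            (hE.intervalIntegrable.of_mem_Icc hp hzac).abs ((hkI z hz).mul_const _) fun t ht => ?_
          have htpq : t ∈ Icc p q := ⟨ht.1, ht.2.trans hz.2⟩
          exact (hρ t (hpqac htpq)).trans
            (mul_le_mul_of_nonneg_left (hmax htpq) (hk0 t (hpqac htpq)))
      _ = (∫ t in p..z, k t) * E m := intervalIntegral.integral_mul_const _ _
      _ ≤ 1 / 4 * E m := mul_le_mul_of_nonneg_right hkz (hE0 m (hpqac hm))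
      _ = E m / 4 := by ring
  have hm' := abs_le.1 (hdev m hm)
  have hq' := abs_le.1 (hdev q (right_mem_Icc.2 hpq))
  linarith

theorem pow_mul_le (hE : IsPrimitiveOn E ρ a c) (hk : IntervalIntegrable k volume a c)
    (hk0 : ∀ x ∈ Icc a c, 0 ≤ k x) (hE0 : ∀ x ∈ Icc a c, 0 ≤ E x)
    (hρ : ∀ x ∈ Icc a c, |ρ x| ≤ k x * E x) (n : ℕ) {p q : ℝ} (hp : p ∈ Icc a c)
    (hq : q ∈ Icc a c) (hpq : p ≤ q) (hn : ∫ t in p..q, k t ≤ (n + 1) / 4) :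
    (2 / 3) ^ (n + 1) * E p ≤ E q := by
  induction n generalizing q with
  | zero => simpa using hE.two_thirds_mul_le hk hk0 hE0 hρ hp hq hpq (by simpa using hn)
  | succ n ih =>
    rcases le_or_gt (∫ t in p..q, k t) ((n + 1) / 4) with hle | hgt
    · calc (2 / 3 : ℝ) ^ (n + 1 + 1) * E p ≤ (2 / 3) ^ (n + 1) * E p :=
          mul_le_mul_of_nonneg_right (pow_le_pow_of_le_one (by norm_num) (by norm_num) (by omega))
            (hE0 p hp)
        _ ≤ E q := ih hq hpq hle
    · have hkI : ∀ z ∈ Icc p q, IntervalIntegrable k volume p z := fun z hz =>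
        hk.of_mem_Icc hp ⟨hp.1.trans hz.1, hz.2.trans hq.2⟩
      have hr : ContinuousOn (fun z => ∫ t in p..z, k t) (Icc p q) :=
        uIcc_of_le hpq ▸ intervalIntegral.continuousOn_primitive_interval'
          (hkI q (right_mem_Icc.2 hpq)) left_mem_uIcc
      -- cut `[p, q]` where `∫ k` reaches `(n + 1) / 4`
      obtain ⟨y, hy, hry⟩ := intermediate_value_Icc hpq hr
        ⟨by simp only [intervalIntegral.integral_same]; positivity, hgt.le⟩
      simp only at hry
      have hyac : y ∈ Icc a c := ⟨hp.1.trans hy.1, hy.2.trans hq.2⟩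
      have hyq : ∫ t in y..q, k t ≤ 1 / 4 := by
        rw [← intervalIntegral.integral_interval_sub_left (hkI q (right_mem_Icc.2 hpq)) (hkI y hy),
          hry]
        push_cast at hn
        linarith
      calc (2 / 3 : ℝ) ^ (n + 1 + 1) * E p = 2 / 3 * ((2 / 3) ^ (n + 1) * E p) := by ring
        _ ≤ 2 / 3 * E y := by gcongr; exact ih hyac hy.1 hry.le
        _ ≤ E q := hE.two_thirds_mul_le hk hk0 hE0 hρ hyac hq hy.2 hyq

theorem mul_le_integral (hE : IsPrimitiveOn E ρ a c) (hk : IntervalIntegrable k volume a c)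
    (hk0 : ∀ x ∈ Icc a c, 0 ≤ k x) (hE0 : ∀ x ∈ Icc a c, 0 ≤ E x)
    (hρ : ∀ x ∈ Icc a c, |ρ x| ≤ k x * E x) :
    (c - a) * ((2 / 3) ^ (⌈4 * ∫ t in a..c, k t⌉₊ + 1) * E a) ≤ ∫ x in a..c, E x := by
  have ha : a ∈ Icc a c := left_mem_Icc.2 hE.le
  have hK : ∫ t in a..c, k t ≤ (⌈4 * ∫ t in a..c, k t⌉₊ + 1) / 4 := by
    linarith [Nat.le_ceil (4 * ∫ t in a..c, k t)]
  have hEx : ∀ x ∈ Icc a c, (2 / 3) ^ (⌈4 * ∫ t in a..c, k t⌉₊ + 1) * E a ≤ E x :=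
    fun x hx => hE.pow_mul_le hk hk0 hE0 hρ _ ha hx hx.1 <|
      (intervalIntegral.integral_mono_interval le_rfl hx.1 hx.2
        ((ae_restrict_mem measurableSet_Ioc).mono fun t ht => hk0 t (Ioc_subset_Icc_self ht))
        hk).trans hK
  simpa only [intervalIntegral.integral_const, smul_eq_mul] using
    intervalIntegral.integral_mono_on hE.le (intervalIntegrable_const (μ := volume))
    ((uIcc_of_le hE.le ▸ hE.continuousOn).intervalIntegrable) hEx

end Gronwall

end IsPrimitiveOn

section CanonicalSystem

theorem J2_mul_diagonal_mulVec (p q : ℝ) (v : Fin 2 → ℝ) :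
    (J2 * !![p, 0; 0, q]) *ᵥ v = ![-(q * v 1), p * v 0] := by
  ext i
  fin_cases i <;> simp [J2, Matrix.mulVec, dotProduct, Fin.sum_univ_two]

theorem dotProduct_diagonal_mulVec (p q : ℝ) (v : Fin 2 → ℝ) :
    v ⬝ᵥ (!![p, 0; 0, q] *ᵥ v) = p * v 0 ^ 2 + q * v 1 ^ 2 := by
  simp [Matrix.mulVec, dotProduct, Fin.sum_univ_two]
  ring

variable {p q p' q' : ℝ → ℝ} {u : ℝ → Fin 2 → ℝ} {lam a c : ℝ}

theorem isPrimitiveOn_apply_of_diagonal_canonical_system (hac : a ≤ c)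
    (hp : IntegrableOn p (Icc a c)) (hq : IntegrableOn q (Icc a c))
    (hu : ContinuousOn u (Icc a c))
    (heq : ∀ x ∈ Icc a c, u x = u a + lam • ∫ s in a..x, (J2 * !![p s, 0; 0, q s]) *ᵥ u s) :
    IsPrimitiveOn (fun x => u x 0) (fun s => -(lam * (q s * u s 1))) a c ∧
      IsPrimitiveOn (fun x => u x 1) (fun s => lam * (p s * u s 0)) a c := by
  have hV : IntegrableOn (fun s => ![-(q s * u s 1), p s * u s 0]) (Icc a c) := by
    refine integrable_pi_iff.2 (Fin.forall_fin_two.2 ⟨?_, ?_⟩)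
    · exact (hq.mul_continuousOn ((continuous_apply 1).comp_continuousOn hu) isCompact_Icc).neg
    · exact hp.mul_continuousOn ((continuous_apply 0).comp_continuousOn hu) isCompact_Icc
  have hU : IsPrimitiveOn u (fun s => lam • ![-(q s * u s 1), p s * u s 0]) a c := by
    refine ⟨hac, ((intervalIntegrable_iff_integrableOn_Icc_of_le hac).2 hV).smul lam,
      fun x hx => ?_⟩
    simp_rw [heq x hx, J2_mul_diagonal_mulVec, intervalIntegral.integral_smul]
  exact ⟨by simpa using hU.comp_continuousLinearMap (ContinuousLinearMap.proj 0),
    by simpa using hU.comp_continuousLinearMap (ContinuousLinearMap.proj 1)⟩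

theorem isPrimitiveOn_mul_sq_add_mul_sq (hp : IsPrimitiveOn p p' a c) (hq : IsPrimitiveOn q q' a c)
    (hu₀ : IsPrimitiveOn (fun x => u x 0) (fun s => -(lam * (q s * u s 1))) a c)
    (hu₁ : IsPrimitiveOn (fun x => u x 1) (fun s => lam * (p s * u s 0)) a c) :
    IsPrimitiveOn (fun x => p x * u x 0 ^ 2 + q x * u x 1 ^ 2)
      (fun s => p' s * u s 0 ^ 2 + q' s * u s 1 ^ 2) a c := by
  have h := ((hp.mul (hu₀.mul hu₀)).add (hq.mul (hu₁.mul hu₁))).congr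
    (f' := fun s => p' s * u s 0 ^ 2 + q' s * u s 1 ^ 2) fun s _ => by ring
  simpa only [← sq] using h

theorem mul_le_integral_mul_sq_add_mul_sq {δ : ℝ} (hp : IsPrimitiveOn p p' a c)
    (hq : IsPrimitiveOn q q' a c)
    (hu₀ : IsPrimitiveOn (fun x => u x 0) (fun s => -(lam * (q s * u s 1))) a c)
    (hu₁ : IsPrimitiveOn (fun x => u x 1) (fun s => lam * (p s * u s 0)) a c) (hδ : 0 < δ)
    (hpδ : ∀ x ∈ Icc a c, δ ≤ p x) (hqδ : ∀ x ∈ Icc a c, δ ≤ q x) :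
    (c - a) * (2 / 3) ^ (⌈4 * ∫ t in a..c, (|p' t| + |q' t|) / δ⌉₊ + 1) * δ *
        (u a 0 ^ 2 + u a 1 ^ 2) ≤ ∫ x in a..c, (p x * u x 0 ^ 2 + q x * u x 1 ^ 2) := by
  have hδE : ∀ x ∈ Icc a c, δ * (u x 0 ^ 2 + u x 1 ^ 2) ≤ p x * u x 0 ^ 2 + q x * u x 1 ^ 2 :=
    fun x hx => by nlinarith [hpδ x hx, hqδ x hx, sq_nonneg (u x 0), sq_nonneg (u x 1)]
  have hρ : ∀ x ∈ Icc a c, |p' x * u x 0 ^ 2 + q' x * u x 1 ^ 2|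
      ≤ (|p' x| + |q' x|) / δ * (p x * u x 0 ^ 2 + q x * u x 1 ^ 2) := by
    intro x hx
    calc |p' x * u x 0 ^ 2 + q' x * u x 1 ^ 2| ≤ |p' x| * u x 0 ^ 2 + |q' x| * u x 1 ^ 2 :=
          (abs_add_le _ _).trans_eq (by rw [abs_mul, abs_mul, abs_sq, abs_sq])
      _ ≤ (|p' x| + |q' x|) * (u x 0 ^ 2 + u x 1 ^ 2) := by
          nlinarith [abs_nonneg (p' x), abs_nonneg (q' x), sq_nonneg (u x 0), sq_nonneg (u x 1)]
      _ ≤ (|p' x| + |q' x|) / δ * (p x * u x 0 ^ 2 + q x * u x 1 ^ 2) := by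
          rw [div_mul_eq_mul_div, le_div_iff₀ hδ, mul_assoc, mul_comm _ δ]
          gcongr
          exact hδE x hx
  have hbound := (isPrimitiveOn_mul_sq_add_mul_sq hp hq hu₀ hu₁).mul_le_integral
    ((hp.intervalIntegrable.abs.add hq.intervalIntegrable.abs).div_const δ)
    (fun _ _ => by positivity) (fun x hx => (by positivity : (0 : ℝ) ≤ δ * _).trans (hδE x hx)) hρ
  calc _ = (c - a) * ((2 / 3) ^ (⌈4 * ∫ t in a..c, (|p' t| + |q' t|) / δ⌉₊ + 1) *
        (δ * (u a 0 ^ 2 + u a 1 ^ 2))) := by ring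
    _ ≤ _ := by
        have := sub_nonneg.2 hp.le
        gcongr
        exact hδE a (left_mem_Icc.2 hp.le)
    _ ≤ _ := hbound

theorem integral_mul_sq_add_mul_sq_mono {l r : ℝ} (hla : l ≤ a) (hac : a ≤ c) (hcr : c ≤ r)
    (hp : IntegrableOn p (Icc l r)) (hq : IntegrableOn q (Icc l r))
    (hu : ContinuousOn u (Icc l r)) (hpq : ∀ᵐ x, x ∈ Icc l r → 0 ≤ p x ∧ 0 ≤ q x) :
    ∫ x in a..c, (p x * u x 0 ^ 2 + q x * u x 1 ^ 2)
      ≤ ∫ x in l..r, (p x * u x 0 ^ 2 + q x * u x 1 ^ 2) := by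
  refine intervalIntegral.integral_mono_interval hla hac hcr ?_ ?_
  · filter_upwards [ae_restrict_mem measurableSet_Ioc, ae_restrict_of_ae hpq] with x hx hpqx
    obtain ⟨hpx, hqx⟩ := hpqx (Ioc_subset_Icc_self hx)
    positivity
  · refine (intervalIntegrable_iff_integrableOn_Icc_of_le (hla.trans (hac.trans hcr))).2 ?_
    exact (hp.mul_continuousOn (((continuous_apply 0).comp_continuousOn hu).pow 2)
      isCompact_Icc).add
      (hq.mul_continuousOn (((continuous_apply 1).comp_continuousOn hu).pow 2) isCompact_Icc)

end CanonicalSystem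

theorem norm_lower_bound_general
    (b : ℝ)
    (g : ℝ → ℝ)
    (hgint : IntegrableOn g (Icc 0 b))
    (hgbd : ∀ᵐ x ∂volume, x ∈ Icc (0:ℝ) b → |g x| ≤ 1/2)
    (H : ℝ → Matrix (Fin 2) (Fin 2) ℝ)
    (hH : ∀ x, H x = !![1/2 + g x, 0; 0, 1/2 - g x])
    (a c δ : ℝ) (ha : 0 < a) (hac : a < c) (hcb : c ≤ b) (hδ : 0 < δ)
    (gd : ℝ → ℝ) (hgdint : IntegrableOn gd (Icc a c))
    (hgAC : ∀ x ∈ Icc a c, g x = g a + ∫ s in a..x, gd s)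
    (hgbd2 : ∀ x ∈ Icc a c, |g x| ≤ 1/2 - δ)
    (u : ℝ → ℝ → Fin 2 → ℝ)
    (hucont : ∀ lam, ContinuousOn (u lam) (Icc 0 b))
    (hueq : ∀ lam : ℝ, ∀ x ∈ Icc (0:ℝ) b,
      u lam x = ![1, 0] + lam • ∫ s in (0:ℝ)..x, (J2 * H s) *ᵥ u lam s) :
    ∃ C₁ > 0, ∀ lam : ℝ,
      C₁ * Real.sqrt ((u lam a 0)^2 + (u lam a 1)^2)
        ≤ Real.sqrt (∫ x in (0:ℝ)..b, u lam x ⬝ᵥ (H x *ᵥ u lam x)) := by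
  have h0b : (0 : ℝ) ≤ b := ha.le.trans (hac.le.trans hcb)
  refine ⟨√((c - a) * (2 / 3) ^ (⌈4 * ∫ t in a..c, (|gd t| + |-gd t|) / δ⌉₊ + 1) * δ),
    by positivity, fun lam => ?_⟩
  have hp : IntegrableOn (fun x => 1/2 + g x) (Icc 0 b) :=
    Integrable.add (integrableOn_const measure_Icc_lt_top.ne) hgint
  have hq : IntegrableOn (fun x => 1/2 - g x) (Icc 0 b) :=
    Integrable.sub (integrableOn_const measure_Icc_lt_top.ne) hgint
  obtain ⟨hu₀, hu₁⟩ := isPrimitiveOn_apply_of_diagonal_canonical_system (lam := lam) h0b hp hq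
    (hucont lam) fun x hx => by
      rw [hueq lam x hx, hueq lam 0 (left_mem_Icc.2 h0b), intervalIntegral.integral_same,
        smul_zero, add_zero]
      simp_rw [hH]
  have hg : IsPrimitiveOn g gd a c :=
    ⟨hac.le, (intervalIntegrable_iff_integrableOn_Icc_of_le hac.le).2 hgdint, hgAC⟩
  have hδg : ∀ x ∈ Icc a c, δ ≤ 1/2 + g x ∧ δ ≤ 1/2 - g x := fun x hx => by
    constructor <;> linarith [abs_le.1 (hgbd2 x hx)]
  have hg0 : ∀ᵐ x, x ∈ Icc 0 b → 0 ≤ 1/2 + g x ∧ 0 ≤ 1/2 - g x := by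
    filter_upwards [hgbd] with x hx hxb
    constructor <;> linarith [abs_le.1 (hx hxb)]
  simp_rw [hH, dotProduct_diagonal_mulVec]
  rw [← Real.sqrt_mul (by positivity)]
  exact Real.sqrt_le_sqrt <|
    (mul_le_integral_mul_sq_add_mul_sq (hg.const_add _) (hg.const_sub _)
      (hu₀.mono ha.le hac.le hcb) (hu₁.mono ha.le hac.le hcb) hδ (fun x hx => (hδg x hx).1)
      (fun x hx => (hδg x hx).2)).trans
    (integral_mul_sq_add_mul_sq_mono ha.le hac.le hcb hp hq (hucont lam) hg0)

/-- Lemma 4.3. If `g` is absolutely continuous on `[a,c] ⊂ (0,b]`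
with `|g| ≤ 1/2 - δ` there, then there is `C₁ > 0`, independent of the spectral
parameter, such that `‖u(λ,·)‖_{L²_H(0,b)} ≥ C₁ ‖u(λ,a)‖` for every `λ ∈ ℝ`. -/
theorem norm_lower_bound
    (b : ℝ) (hb : 0 < b)
    (g : ℝ → ℝ)
    (hgint : IntegrableOn g (Icc 0 b))
    (hgbd : ∀ᵐ x ∂volume, x ∈ Icc (0:ℝ) b → |g x| ≤ 1/2)
    (H : ℝ → Matrix (Fin 2) (Fin 2) ℝ)
    (hH : ∀ x, H x = !![1/2 + g x, 0; 0, 1/2 - g x])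
    (a c δ : ℝ) (ha : 0 < a) (hac : a < c) (hcb : c ≤ b) (hδ : 0 < δ)
    (gd : ℝ → ℝ) (hgdint : IntegrableOn gd (Icc a c))
    (hgAC : ∀ x ∈ Icc a c, g x = g a + ∫ s in a..x, gd s)
    (hgbd2 : ∀ x ∈ Icc a c, |g x| ≤ 1/2 - δ)
    (u : ℝ → ℝ → Fin 2 → ℝ)
    (hucont : ∀ lam, ContinuousOn (u lam) (Icc 0 b))
    (hueq : ∀ lam : ℝ, ∀ x ∈ Icc (0:ℝ) b,
      u lam x = ![1, 0] + lam • ∫ s in (0:ℝ)..x, (J2 * H s) *ᵥ u lam s) :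
    ∃ C₁ > 0, ∀ lam : ℝ,
      C₁ * Real.sqrt ((u lam a 0)^2 + (u lam a 1)^2)
        ≤ Real.sqrt (∫ x in (0:ℝ)..b, u lam x ⬝ᵥ (H x *ᵥ u lam x)) :=
  norm_lower_bound_general b g hgint hgbd H hH a c δ ha hac hcb hδ gd hgdint hgAC hgbd2 u hucont
    hueq
end
end

section
/- (Core estimate in the proof of Theorem 4.4.) Let b > 0 and H(x) = diag(1/2 + g(x), 1/2 - g(x)) with g : [0,b] → ℝ integrable, |g| ≤ 1/2 a.e. Suppose there exist [a,c] ⊂ (0,b) and δ > 0 such that g restricted to [a,c] is absolutely continuous with integrable derivative and |g(x)| ≤ 1/2 - δ on [a,c]. Then for every compact set K ⊂ ℂ there exists C > 0 such that for all z ∈ K and all λ ∈ ℝ, |∫ₐ^c u(z,x)ᵀ 𝒥 u(λ,x) dx| ≤ C · (∫₀^b u(λ,x)ᵀ H(x) u(λ,x) dx)^{1/2}. -/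
open MeasureTheory Matrix Set

noncomputable section

/-!
Since `‖𝒥 H(x)‖ ≤ 1` in the sup norm, the integral equation and Grönwall's inequality give
`‖u(z,x)‖ ≤ exp(R b)` uniformly for `|z| ≤ R`, so the integrand is at most `2 exp(R b) ‖u(λ,x)‖`.
On `[a,c]` both diagonal entries of `H` are at least `δ`, hence `δ ‖u(λ,x)‖² ≤ u(λ,x)ᵀ H u(λ,x)`
there (this is where `u(λ,·)` being real matters), and Cauchy–Schwarz on `[a,c]` yields
`∫ₐᶜ ‖u(λ,x)‖ dx ≤ ((c - a)/δ)^{1/2} (∫₀ᵇ u(λ,x)ᵀ H u(λ,x) dx)^{1/2}`.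
-/

theorem le_mul_exp_of_le_add_integral {ψ : ℝ → ℝ} {b C R : ℝ}
    (hψ : ContinuousOn ψ (Icc 0 b)) (hR : 0 ≤ R)
    (h : ∀ x ∈ Icc 0 b, ψ x ≤ C + R * ∫ s in (0 : ℝ)..x, ψ s) :
    ∀ x ∈ Icc 0 b, ψ x ≤ C * Real.exp (R * x) := by
  set φ : ℝ → ℝ := fun x => ∫ s in (0 : ℝ)..x, ψ s
  have hderiv : ∀ x ∈ Icc 0 b, HasDerivWithinAt φ (ψ x) (Icc 0 b) x := by
    intro x hx
    have : Fact (x ∈ Icc 0 b) := ⟨hx⟩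
    exact intervalIntegral.integral_hasDerivWithinAt_right
      (hψ.mono (uIcc_subset_Icc ⟨le_rfl, hx.1.trans hx.2⟩ hx)).intervalIntegrable
      (hψ.stronglyMeasurableAtFilter_nhdsWithin measurableSet_Icc x) (hψ x hx)
  have hφ : ∀ x ∈ Icc 0 b, φ x ≤ gronwallBound 0 R C x := by
    intro x hx
    simpa using le_gronwallBound_of_liminf_deriv_right_le (f := φ) (f' := ψ)
      (fun y hy => (hderiv y hy).continuousWithinAt)
      (fun y hy r hr => ((hderiv y (Ico_subset_Icc_self hy)).mono_of_mem_nhdsWithin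
        (Icc_mem_nhdsGE_of_mem hy)).liminf_right_slope_le hr)
      (by simp [φ]) (fun y hy => by linarith [h y (Ico_subset_Icc_self hy)]) x hx
  intro x hx
  calc ψ x ≤ C + R * φ x := h x hx
    _ ≤ C + R * gronwallBound 0 R C x := by gcongr; exact hφ x hx
    _ = C * Real.exp (R * x) := by
      rcases hR.eq_or_lt with rfl | hR
      · simp [gronwallBound_K0]
      · rw [gronwallBound_of_K_ne_0 hR.ne']
        field_simp
        ring

theorem norm_le_mul_exp_of_eq_add_integral {E : Type*} [NormedAddCommGroup E] [NormedSpace ℝ E]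
    {v F : ℝ → E} {b R : ℝ} {e : E} (hv : ContinuousOn v (Icc 0 b)) (hR : 0 ≤ R)
    (hF : ∀ᵐ s, s ∈ Icc 0 b → ‖F s‖ ≤ R * ‖v s‖)
    (heq : ∀ x ∈ Icc 0 b, v x = e + ∫ s in (0 : ℝ)..x, F s) :
    ∀ x ∈ Icc 0 b, ‖v x‖ ≤ ‖e‖ * Real.exp (R * x) := by
  refine le_mul_exp_of_le_add_integral hv.norm hR fun x hx => ?_
  have hvx : ContinuousOn (fun s => R * ‖v s‖) (uIcc 0 x) := by
    rw [uIcc_of_le hx.1]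
    exact (hv.norm.mono (Icc_subset_Icc_right hx.2)).const_smul R
  calc ‖v x‖ ≤ ‖e‖ + ‖∫ s in (0 : ℝ)..x, F s‖ := by rw [heq x hx]; exact norm_add_le _ _
    _ ≤ ‖e‖ + ∫ s in (0 : ℝ)..x, R * ‖v s‖ := by
      gcongr
      refine intervalIntegral.norm_integral_le_of_norm_le hx.1 ?_ hvx.intervalIntegrable
      filter_upwards [hF] with s hs hsx using hs ⟨hsx.1.le, hsx.2.trans hx.2⟩
    _ = ‖e‖ + R * ∫ s in (0 : ℝ)..x, ‖v s‖ := by rw [intervalIntegral.integral_const_mul]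

theorem sq_intervalIntegral_le {f : ℝ → ℝ} {a c : ℝ} (hac : a ≤ c)
    (hf : IntervalIntegrable f volume a c)
    (hf2 : IntervalIntegrable (fun x => f x ^ 2) volume a c) :
    (∫ x in a..c, f x) ^ 2 ≤ (c - a) * ∫ x in a..c, f x ^ 2 := by
  rcases hac.eq_or_lt with rfl | hac
  · simp
  -- the variance of `f` about its mean `m` is nonnegative
  set m := (∫ x in a..c, f x) / (c - a)
  have hvar : 0 ≤ ∫ x in a..c, (f x - m) ^ 2 :=
    intervalIntegral.integral_nonneg hac.le fun x _ => sq_nonneg _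
  have hexpand : ∫ x in a..c, (f x - m) ^ 2
      = (∫ x in a..c, f x ^ 2) - 2 * m * (∫ x in a..c, f x) + m ^ 2 * (c - a) := by
    simp_rw [show ∀ x, (f x - m) ^ 2 = f x ^ 2 - (2 * m) * f x + m ^ 2 from fun x => by ring]
    rw [intervalIntegral.integral_add (hf2.sub (hf.const_mul _)) intervalIntegrable_const,
      intervalIntegral.integral_sub hf2 (hf.const_mul _), intervalIntegral.integral_const_mul,
      intervalIntegral.integral_const, smul_eq_mul]
    ring
  have hm : m * (c - a) = ∫ x in a..c, f x := by
    simp only [m]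
    field_simp
  nlinarith [sub_pos.mpr hac]

theorem J2C_mul_cmat_diag_mulVec (p q : ℝ) (y : Fin 2 → ℂ) :
    (J2C * cmat !![p, 0; 0, q]) *ᵥ y = ![-(q * y 1), p * y 0] := by
  ext i
  fin_cases i <;> simp [J2C, cmat, mulVec, dotProduct, Matrix.mul_apply, Fin.sum_univ_two]

theorem norm_J2C_mul_cmat_diag_mulVec_le {p q : ℝ} (hp : 0 ≤ p) (hq : 0 ≤ q) (hpq : p + q = 1)
    (y : Fin 2 → ℂ) : ‖(J2C * cmat !![p, 0; 0, q]) *ᵥ y‖ ≤ ‖y‖ := by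
  have hcoord {t : ℝ} (ht₀ : 0 ≤ t) (ht₁ : t ≤ 1) (i : Fin 2) : ‖(t : ℂ) * y i‖ ≤ ‖y‖ := by
    rw [norm_mul, Complex.norm_real, Real.norm_of_nonneg ht₀]
    calc t * ‖y i‖ ≤ 1 * ‖y‖ := by gcongr; exact norm_le_pi_norm y i
      _ = ‖y‖ := one_mul _
  rw [J2C_mul_cmat_diag_mulVec, pi_norm_le_iff_of_nonneg (norm_nonneg y), Fin.forall_fin_two]
  exact ⟨by simpa using hcoord hq (by linarith) 1, by simpa using hcoord hp (by linarith) 0⟩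

theorem norm_dotProduct_J2C_mulVec_le (v w : Fin 2 → ℂ) :
    ‖v ⬝ᵥ (J2C *ᵥ w)‖ ≤ 2 * (‖v‖ * ‖w‖) := by
  have hterm (i j : Fin 2) : ‖v i * w j‖ ≤ ‖v‖ * ‖w‖ := by
    rw [norm_mul]
    exact mul_le_mul (norm_le_pi_norm v i) (norm_le_pi_norm w j) (norm_nonneg _) (norm_nonneg _)
  have hexpand : v ⬝ᵥ (J2C *ᵥ w) = -(v 0 * w 1) + v 1 * w 0 := by
    simp [J2C, mulVec, dotProduct, Fin.sum_univ_two]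
  calc ‖v ⬝ᵥ (J2C *ᵥ w)‖ ≤ ‖v 0 * w 1‖ + ‖v 1 * w 0‖ := by
        simpa only [hexpand, norm_neg] using norm_add_le (-(v 0 * w 1)) (v 1 * w 0)
    _ ≤ 2 * (‖v‖ * ‖w‖) := by linarith [hterm 0 1, hterm 1 0]

theorem norm_ofReal_comp (r : Fin 2 → ℝ) : ‖Complex.ofReal ∘ r‖ = ‖r‖ := by
  simp [Pi.norm_def, Complex.nnnorm_real]

theorem ofReal_comp_dotProduct_cmat_mulVec (M : Matrix (Fin 2) (Fin 2) ℝ) (r : Fin 2 → ℝ) :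
    (Complex.ofReal ∘ r) ⬝ᵥ (cmat M *ᵥ (Complex.ofReal ∘ r)) = ((r ⬝ᵥ (M *ᵥ r) : ℝ) : ℂ) := by
  simp [cmat, mulVec, dotProduct, Fin.sum_univ_two]

theorem dotProduct_diag_mulVec (p q : ℝ) (r : Fin 2 → ℝ) :
    r ⬝ᵥ (!![p, 0; 0, q] *ᵥ r) = p * r 0 ^ 2 + q * r 1 ^ 2 := by
  simp only [dotProduct, mulVec, of_apply, cons_val', cons_val_fin_one, Fin.sum_univ_two,
    cons_val_zero, cons_val_one, zero_mul, add_zero, zero_add]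
  ring

theorem mul_sq_norm_le_dotProduct_diag_mulVec {δ p q : ℝ} (hδ : 0 ≤ δ) (hp : δ ≤ p) (hq : δ ≤ q)
    (r : Fin 2 → ℝ) : δ * ‖r‖ ^ 2 ≤ r ⬝ᵥ (!![p, 0; 0, q] *ᵥ r) := by
  have hnorm : ‖r‖ ≤ √(r 0 ^ 2 + r 1 ^ 2) := by
    refine (pi_norm_le_iff_of_nonneg (Real.sqrt_nonneg _)).2 fun i => ?_
    rw [Real.norm_eq_abs]
    apply Real.abs_le_sqrt
    fin_cases i <;> simp [sq_nonneg]
  have hnorm_sq : ‖r‖ ^ 2 ≤ r 0 ^ 2 + r 1 ^ 2 := by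
    calc ‖r‖ ^ 2 ≤ √(r 0 ^ 2 + r 1 ^ 2) ^ 2 := by gcongr
      _ = r 0 ^ 2 + r 1 ^ 2 := Real.sq_sqrt (by positivity)
  rw [dotProduct_diag_mulVec]
  nlinarith [sq_nonneg (r 0), sq_nonneg (r 1)]

theorem norm_le_mul_exp_of_eq_add_smul_integral_J2C_mul {p q : ℝ → ℝ} {b : ℝ}
    (hpq : ∀ᵐ s, s ∈ Icc 0 b → 0 ≤ p s ∧ 0 ≤ q s) (hsum : ∀ s, p s + q s = 1)
    {z : ℂ} {e : Fin 2 → ℂ} {v : ℝ → Fin 2 → ℂ} (hv : ContinuousOn v (Icc 0 b))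
    (heq : ∀ x ∈ Icc 0 b,
      v x = e + z • ∫ s in (0 : ℝ)..x, (J2C * cmat !![p s, 0; 0, q s]) *ᵥ v s) :
    ∀ x ∈ Icc 0 b, ‖v x‖ ≤ ‖e‖ * Real.exp (‖z‖ * x) := by
  refine norm_le_mul_exp_of_eq_add_integral hv (norm_nonneg z)
    (F := fun s => z • (J2C * cmat !![p s, 0; 0, q s]) *ᵥ v s) ?_
    fun x hx => by rw [heq x hx, intervalIntegral.integral_smul]
  filter_upwards [hpq] with s hs hsb
  rw [norm_smul]
  gcongr
  exact norm_J2C_mul_cmat_diag_mulVec_le (hs hsb).1 (hs hsb).2 (hsum s) _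

theorem norm_integral_dotProduct_J2C_mulVec_le {a c M : ℝ} {v w : ℝ → Fin 2 → ℂ} (hac : a ≤ c)
    (hvM : ∀ x ∈ Icc a c, ‖v x‖ ≤ M) (hw : ContinuousOn w (Icc a c)) :
    ‖∫ x in a..c, v x ⬝ᵥ (J2C *ᵥ w x)‖ ≤ 2 * M * ∫ x in a..c, ‖w x‖ := by
  rw [← intervalIntegral.integral_const_mul]
  refine intervalIntegral.norm_integral_le_of_norm_le hac (ae_of_all _ fun x hx => ?_) ?_
  · calc ‖v x ⬝ᵥ (J2C *ᵥ w x)‖ ≤ 2 * (‖v x‖ * ‖w x‖) := norm_dotProduct_J2C_mulVec_le _ _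
      _ ≤ 2 * M * ‖w x‖ := by
        rw [← mul_assoc]
        gcongr
        exact hvM x (Ioc_subset_Icc_self hx)
  · exact ((hw.norm.const_smul (2 * M)).mono (uIcc_of_le hac).subset).intervalIntegrable

theorem integrableOn_dotProduct_diag_mulVec {p q : ℝ → ℝ} {w : ℝ → Fin 2 → ℝ} {s : Set ℝ}
    (hs : IsCompact s) (hp : IntegrableOn p s) (hq : IntegrableOn q s) (hw : ContinuousOn w s) :
    IntegrableOn (fun x => w x ⬝ᵥ (!![p x, 0; 0, q x] *ᵥ w x)) s := by
  simp_rw [dotProduct_diag_mulVec]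
  have hsq (i : Fin 2) : ContinuousOn (fun x => w x i ^ 2) s :=
    ((continuous_apply i).comp_continuousOn hw).pow 2
  exact (hp.mul_continuousOn (hsq 0) hs).add (hq.mul_continuousOn (hsq 1) hs)

theorem integral_norm_le_sqrt_mul_integral_dotProduct_diag_mulVec {p q : ℝ → ℝ}
    {w : ℝ → Fin 2 → ℝ} {a c δ : ℝ} (hac : a ≤ c) (hδ : 0 < δ) (hw : ContinuousOn w (Icc a c))
    (hpq : ∀ x ∈ Icc a c, δ ≤ p x ∧ δ ≤ q x)
    (hQ : IntervalIntegrable (fun x => w x ⬝ᵥ (!![p x, 0; 0, q x] *ᵥ w x)) volume a c) :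
    ∫ x in a..c, ‖w x‖ ≤ √((c - a) / δ * ∫ x in a..c, w x ⬝ᵥ (!![p x, 0; 0, q x] *ᵥ w x)) := by
  have hnorm : ContinuousOn (fun x => ‖w x‖) (uIcc a c) := by
    rw [uIcc_of_le hac]
    exact hw.norm
  rw [← Real.sqrt_sq (intervalIntegral.integral_nonneg hac fun x _ => norm_nonneg (w x))]
  apply Real.sqrt_le_sqrt
  calc (∫ x in a..c, ‖w x‖) ^ 2 ≤ (c - a) * ∫ x in a..c, ‖w x‖ ^ 2 :=
        sq_intervalIntegral_le hac hnorm.intervalIntegrable (hnorm.pow 2).intervalIntegrable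
    _ ≤ (c - a) * ∫ x in a..c, w x ⬝ᵥ (!![p x, 0; 0, q x] *ᵥ w x) / δ := by
        gcongr
        refine intervalIntegral.integral_mono_on hac (hnorm.pow 2).intervalIntegrable
          (hQ.div_const δ) fun x hx => ?_
        rw [le_div_iff₀' hδ]
        exact mul_sq_norm_le_dotProduct_diag_mulVec hδ.le (hpq x hx).1 (hpq x hx).2 (w x)
    _ = (c - a) / δ * ∫ x in a..c, w x ⬝ᵥ (!![p x, 0; 0, q x] *ᵥ w x) := by
        rw [intervalIntegral.integral_div]
        ring

theorem re_intervalIntegral_dotProduct_cmat_mulVec {M : ℝ → Matrix (Fin 2) (Fin 2) ℝ}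
    {w : ℝ → Fin 2 → ℂ} {r : ℝ → Fin 2 → ℝ} {a b : ℝ} (hab : a ≤ b)
    (hwr : ∀ x ∈ Icc a b, w x = Complex.ofReal ∘ r x) :
    (∫ x in a..b, w x ⬝ᵥ (cmat (M x) *ᵥ w x)).re = ∫ x in a..b, r x ⬝ᵥ (M x *ᵥ r x) := by
  rw [intervalIntegral.integral_congr (g := fun x => ((r x ⬝ᵥ (M x *ᵥ r x) : ℝ) : ℂ)),
    intervalIntegral.integral_ofReal, Complex.ofReal_re]
  intro x hx
  rw [uIcc_of_le hab] at hx
  simp only [hwr x hx, ofReal_comp_dotProduct_cmat_mulVec]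

theorem integral_norm_le_sqrt_mul_sqrt_re_integral {p q : ℝ → ℝ} {w : ℝ → Fin 2 → ℂ}
    {a b c δ : ℝ} (ha : 0 ≤ a) (hac : a ≤ c) (hcb : c ≤ b) (hδ : 0 < δ)
    (hp : IntegrableOn p (Icc 0 b)) (hq : IntegrableOn q (Icc 0 b))
    (hpq : ∀ᵐ x, x ∈ Icc 0 b → 0 ≤ p x ∧ 0 ≤ q x) (hpqδ : ∀ x ∈ Icc a c, δ ≤ p x ∧ δ ≤ q x)
    (hw : ContinuousOn w (Icc 0 b)) (hreal : ∀ x ∈ Icc 0 b, ∀ i, (w x i).im = 0) :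
    ∫ x in a..c, ‖w x‖
      ≤ √((c - a) / δ) * √(∫ x in (0 : ℝ)..b, w x ⬝ᵥ (cmat !![p x, 0; 0, q x] *ᵥ w x)).re := by
  set r : ℝ → Fin 2 → ℝ := fun x i => (w x i).re
  set Q : ℝ → ℝ := fun x => r x ⬝ᵥ (!![p x, 0; 0, q x] *ᵥ r x)
  have hb : 0 ≤ b := ha.trans (hac.trans hcb)
  have hsub : Icc a c ⊆ Icc 0 b := Icc_subset_Icc ha hcb
  have hwr : ∀ x ∈ Icc 0 b, w x = Complex.ofReal ∘ r x := fun x hx =>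
    funext fun i => Complex.ext rfl (by simp [hreal x hx i])
  have hr : ContinuousOn r (Icc 0 b) := continuousOn_pi.2 fun i =>
    Complex.continuous_re.comp_continuousOn ((continuous_apply i).comp_continuousOn hw)
  have hQ : IntervalIntegrable Q volume 0 b := by
    refine IntegrableOn.intervalIntegrable ?_
    rw [uIcc_of_le hb]
    exact integrableOn_dotProduct_diag_mulVec isCompact_Icc hp hq hr
  have hQ_mono : ∫ x in a..c, Q x ≤ ∫ x in (0 : ℝ)..b, Q x := by
    refine intervalIntegral.integral_mono_interval ha hac hcb ?_ hQ
    filter_upwards [ae_restrict_mem measurableSet_Ioc, ae_restrict_of_ae hpq] with x hx hpqx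
    obtain ⟨hpx, hqx⟩ := hpqx (Ioc_subset_Icc_self hx)
    show 0 ≤ Q x
    simpa only [zero_mul] using mul_sq_norm_le_dotProduct_diag_mulVec le_rfl hpx hqx (r x)
  calc ∫ x in a..c, ‖w x‖ = ∫ x in a..c, ‖r x‖ := by
        refine intervalIntegral.integral_congr fun x hx => ?_
        rw [uIcc_of_le hac] at hx
        simp only [hwr x (hsub hx), norm_ofReal_comp]
    _ ≤ √((c - a) / δ * ∫ x in a..c, Q x) :=
        integral_norm_le_sqrt_mul_integral_dotProduct_diag_mulVec hac hδ (hr.mono hsub) hpqδ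
          (hQ.mono_set (by rw [uIcc_of_le hac, uIcc_of_le hb]; exact hsub))
    _ ≤ √((c - a) / δ * ∫ x in (0 : ℝ)..b, Q x) := by gcongr
    _ = _ := by rw [Real.sqrt_mul (div_nonneg (sub_nonneg.2 hac) hδ.le),
        re_intervalIntegral_dotProduct_cmat_mulVec hb hwr]

theorem pairing_bound_AC_case_general
    (b : ℝ)
    (g : ℝ → ℝ)
    (hgint : IntegrableOn g (Icc 0 b))
    (hgbd : ∀ᵐ x ∂volume, x ∈ Icc (0:ℝ) b → |g x| ≤ 1/2)
    (H : ℝ → Matrix (Fin 2) (Fin 2) ℝ)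
    (hH : ∀ x, H x = !![1/2 + g x, 0; 0, 1/2 - g x])
    (a c δ : ℝ) (ha : 0 < a) (hac : a < c) (hcb : c < b) (hδ : 0 < δ)
    (hgbd2 : ∀ x ∈ Icc a c, |g x| ≤ 1/2 - δ)
    (u : ℂ → ℝ → Fin 2 → ℂ)
    (hucont : ∀ z, ContinuousOn (u z) (Icc 0 b))
    (hueq : ∀ z : ℂ, ∀ x ∈ Icc (0:ℝ) b,
      u z x = ![1, 0] + z • ∫ s in (0:ℝ)..x, (J2C * cmat (H s)) *ᵥ u z s)
    (hureal : ∀ (t : ℝ), ∀ x ∈ Icc (0:ℝ) b, ∀ i, (u (t : ℂ) x i).im = 0) :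
    ∀ K : Set ℂ, IsCompact K → ∃ C > 0, ∀ z ∈ K, ∀ lam : ℝ,
      ‖∫ x in a..c, u z x ⬝ᵥ (J2C *ᵥ u (lam : ℂ) x)‖
        ≤ C * Real.sqrt
            (∫ x in (0:ℝ)..b, u (lam : ℂ) x ⬝ᵥ (cmat (H x) *ᵥ u (lam : ℂ) x)).re := by
  intro K hK
  obtain ⟨R, hR⟩ := hK.isBounded.exists_norm_le
  obtain rfl : H = fun x => !![1/2 + g x, 0; 0, 1/2 - g x] := funext hH
  have hsub : Icc a c ⊆ Icc 0 b := Icc_subset_Icc ha.le hcb.le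
  have hweights : ∀ᵐ x, x ∈ Icc 0 b → 0 ≤ 1/2 + g x ∧ 0 ≤ 1/2 - g x := by
    filter_upwards [hgbd] with x hx hxb
    have hg := abs_le.1 (hx hxb)
    constructor <;> linarith
  have hweights_δ : ∀ x ∈ Icc a c, δ ≤ 1/2 + g x ∧ δ ≤ 1/2 - g x := fun x hx => by
    have hg := abs_le.1 (hgbd2 x hx)
    constructor <;> linarith
  refine ⟨2 * Real.exp (R * b) * √((c - a) / δ),
    mul_pos (by positivity) (Real.sqrt_pos.2 (div_pos (sub_pos.2 hac) hδ)), fun z hz lam => ?_⟩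
  have hbound : ∀ x ∈ Icc a c, ‖u z x‖ ≤ Real.exp (R * b) := fun x hx => by
    have hx' := hsub hx
    have he : ‖(![1, 0] : Fin 2 → ℂ)‖ = 1 := by simp [Pi.norm_def, Fin.univ_succ]
    calc ‖u z x‖ ≤ ‖(![1, 0] : Fin 2 → ℂ)‖ * Real.exp (‖z‖ * x) :=
          norm_le_mul_exp_of_eq_add_smul_integral_J2C_mul hweights (fun _ => by ring)
            (hucont z) (hueq z) x hx'
      _ ≤ Real.exp (R * b) := by
          rw [he, one_mul, Real.exp_le_exp]
          exact mul_le_mul (hR z hz) hx'.2 hx'.1 ((norm_nonneg z).trans (hR z hz))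
  calc _ ≤ 2 * Real.exp (R * b) * ∫ x in a..c, ‖u lam x‖ :=
        norm_integral_dotProduct_J2C_mulVec_le hac.le hbound ((hucont lam).mono hsub)
    _ ≤ _ := by
        rw [mul_assoc _ √_]
        gcongr
        exact integral_norm_le_sqrt_mul_sqrt_re_integral ha.le hac.le hcb.le hδ
          ((integrableOn_const (by simp)).add hgint) ((integrableOn_const (by simp)).sub hgint)
          hweights hweights_δ (hucont lam) (hureal lam)

/-- core estimate in the proof of Theorem 4.4. If `g` is
absolutely continuous on `[a,c] ⊂ (0,b)` with `|g| ≤ 1/2 - δ` there, then for every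
compact `K ⊂ ℂ` there is `C > 0` with
`|∫ₐᶜ u(z,x)ᵀ 𝒥 u(λ,x) dx| ≤ C ‖u(λ,·)‖_{L²_H(0,b)}` for all `z ∈ K`, `λ ∈ ℝ`. -/
theorem pairing_bound_AC_case
    (b : ℝ) (hb : 0 < b)
    (g : ℝ → ℝ)
    (hgint : IntegrableOn g (Icc 0 b))
    (hgbd : ∀ᵐ x ∂volume, x ∈ Icc (0:ℝ) b → |g x| ≤ 1/2)
    (H : ℝ → Matrix (Fin 2) (Fin 2) ℝ)
    (hH : ∀ x, H x = !![1/2 + g x, 0; 0, 1/2 - g x])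
    (a c δ : ℝ) (ha : 0 < a) (hac : a < c) (hcb : c < b) (hδ : 0 < δ)
    (gd : ℝ → ℝ) (hgdint : IntegrableOn gd (Icc a c))
    (hgAC : ∀ x ∈ Icc a c, g x = g a + ∫ s in a..x, gd s)
    (hgbd2 : ∀ x ∈ Icc a c, |g x| ≤ 1/2 - δ)
    (u : ℂ → ℝ → Fin 2 → ℂ)
    (hucont : ∀ z, ContinuousOn (u z) (Icc 0 b))
    (hueq : ∀ z : ℂ, ∀ x ∈ Icc (0:ℝ) b,
      u z x = ![1, 0] + z • ∫ s in (0:ℝ)..x, (J2C * cmat (H s)) *ᵥ u z s)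
    (hureal : ∀ (t : ℝ), ∀ x ∈ Icc (0:ℝ) b, ∀ i, (u (t : ℂ) x i).im = 0) :
    ∀ K : Set ℂ, IsCompact K → ∃ C > 0, ∀ z ∈ K, ∀ lam : ℝ,
      ‖∫ x in a..c, u z x ⬝ᵥ (J2C *ᵥ u (lam : ℂ) x)‖
        ≤ C * Real.sqrt
            (∫ x in (0:ℝ)..b, u (lam : ℂ) x ⬝ᵥ (cmat (H x) *ᵥ u (lam : ℂ) x)).re :=
  pairing_bound_AC_case_general b g hgint hgbd H hH a c δ ha hac hcb hδ hgbd2 u hucont hueq hureal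
end
end
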